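/- arXiv:1805.00515 — 2 statements merged into one kernel-verified Lean document; each statement's English description precedes it below -/
import Mathlib

section
/- Let q(a,b) = Ea² + 2Fab + Gb² be a quadratic form on ℝ² with E < 0 and EG - F² < 0, with associated bilinear form B. If a direction (1,m) is space-like (q(1,m) > 0) and satisfies B((1,0),(1,m))² = sinh²φ · (-q(1,0))·q(1,m) for a constant φ ≥ 0, then m satisfies (sinh²φ·EG + F²)m² + 2 cosh²φ·EF·m = -cosh²φ·E². -/
/-- Time-like surface with time-like meridians: if the space-like direction
(1,m) makes constant Lorentzian time-like angle φ with the time-like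
direction (1,0), then m satisfies
(sinh²φ EG + F²)m² + 2 cosh²φ EF m = -cosh²φ E². -/
theorem loxodrome_slope_equation_timelike_meridians (E F G φ m : ℝ)
    (hE : E < 0) (hEG : E * G - F ^ 2 < 0)
    (hm : 0 < E + 2 * F * m + G * m ^ 2) (hφ : 0 ≤ φ)
    (hangle : (E + F * m) ^ 2 =
      Real.sinh φ ^ 2 * (-E) * (E + 2 * F * m + G * m ^ 2)) :
    (Real.sinh φ ^ 2 * E * G + F ^ 2) * m ^ 2
      + 2 * Real.cosh φ ^ 2 * E * F * m = -(Real.cosh φ ^ 2) * E ^ 2 := by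
  have h := Real.cosh_sq φ
  linear_combination hangle + (E ^ 2 + 2 * E * F * m) * h
end

section
/- If E, F, G satisfy E < 0 and EG - F² < 0, and φ ≥ 0, then any real solution m of (sinh²φ EG + F²)m² + 2 cosh²φ EF m = -cosh²φ E² satisfies (E + Fm)² = sinh²φ · (-E) · (E + 2Fm + Gm²); consequently if additionally E + 2Fm + Gm² > 0, the Lorentzian time-like angle between the space-like direction (1,m) and the time-like direction (1,0) equals φ. -/
/-- Converse for the time-like surface with time-like meridians: any real
solution m of the loxodrome equation satisfies
(E + Fm)² = sinh²φ (-E)(E + 2Fm + Gm²); if moreover (1,m) is space-like the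
Lorentzian time-like angle between (1,m) and (1,0) equals φ. -/
theorem loxodrome_slope_solution_angle_timelike_meridians (E F G φ m : ℝ)
    (hE : E < 0) (hEG : E * G - F ^ 2 < 0) (hφ : 0 ≤ φ)
    (heq : (Real.sinh φ ^ 2 * E * G + F ^ 2) * m ^ 2
      + 2 * Real.cosh φ ^ 2 * E * F * m = -(Real.cosh φ ^ 2) * E ^ 2) :
    (E + F * m) ^ 2
      = Real.sinh φ ^ 2 * (-E) * (E + 2 * F * m + G * m ^ 2) ∧
    (0 < E + 2 * F * m + G * m ^ 2 →
      |E + F * m| = Real.sqrt (E + 2 * F * m + G * m ^ 2)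
        * Real.sqrt (-E) * Real.sinh φ) := by
  have hc : Real.cosh φ ^ 2 = 1 + Real.sinh φ ^ 2 := by
    have := Real.cosh_sq φ; linarith
  have h1 : (E + F * m) ^ 2
      = Real.sinh φ ^ 2 * (-E) * (E + 2 * F * m + G * m ^ 2) := by
    rw [hc] at heq; ring_nf at heq ⊢; linarith
  refine ⟨h1, fun hq => ?_⟩
  have hs : 0 ≤ Real.sinh φ := by simpa using Real.sinh_le_sinh.mpr hφ
  have : |E + F * m| = Real.sqrt ((E + F * m) ^ 2) := (Real.sqrt_sq_eq_abs _).symm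
  rw [this, h1, show Real.sinh φ ^ 2 * (-E) * (E + 2 * F * m + G * m ^ 2)
      = (E + 2 * F * m + G * m ^ 2) * (-E) * Real.sinh φ ^ 2 by ring,
    Real.sqrt_mul (by nlinarith), Real.sqrt_mul hq.le, Real.sqrt_sq hs]
end
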